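/- arXiv:2212.01524 — 3 statements merged into one kernel-verified Lean document; each statement's English description precedes it below -/
import Mathlib

section
/- Suppose real numbers OPT, OPTcommit, UW, Uopen, Uclosed, cB and β ∈ [0,1] satisfy Uopen ≥ OPT - β·cB, Uclosed ≥ OPT - (1-β)·(UW - cB), Uopen ≤ OPTcommit, Uclosed ≤ OPTcommit, and 0 ≤ UW ≤ OPTcommit. Then OPTcommit ≥ OPT/(1 + β(1-β)) ≥ (4/5)·OPT, assuming OPT ≥ 0. -/
theorem committing_approx
    (OPT OPTcommit UW Uopen Uclosed cB β : ℝ)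
    (hβ : β ∈ Set.Icc (0:ℝ) 1) (hOPT : 0 ≤ OPT)
    (h1 : Uopen ≥ OPT - β * cB)
    (h2 : Uclosed ≥ OPT - (1 - β) * (UW - cB))
    (h3 : Uopen ≤ OPTcommit) (h4 : Uclosed ≤ OPTcommit)
    (h5 : 0 ≤ UW) (h6 : UW ≤ OPTcommit) :
    OPTcommit ≥ OPT / (1 + β * (1 - β)) ∧ OPT / (1 + β * (1 - β)) ≥ (4/5) * OPT := by
  obtain ⟨hb0, hb1⟩ := hβ
  have hd : (1:ℝ) ≤ 1 + β * (1 - β) := by nlinarith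
  constructor
  · rw [ge_iff_le, div_le_iff₀ (by linarith)]
    nlinarith [mul_le_mul_of_nonneg_left (le_trans h1 (le_of_le_of_eq h3 rfl)) (by linarith : (0:ℝ) ≤ 1 - β)]
  · rw [ge_iff_le, le_div_iff₀ (by linarith)]
    nlinarith [mul_nonneg hOPT (sq_nonneg (β - 1/2))]
end

section
/- Let v, W be independent integrable random variables with v, W ≥ 0, let τ ≤ σ be reals with c = E[(v - σ)^+] and κ = min(v, σ). Then Pr[v > τ]·E[max(W, v) | v > τ] - c = Pr[v > τ]·( E[(W - v)^+ | v > τ] + E[κ | v > τ] ), where inside the conditional expectations W remains independent of v. -/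
open MeasureTheory ProbabilityTheory

theorem cost_elimination_identity
    {Ω : Type*} [MeasurableSpace Ω] (μ : Measure Ω) [IsProbabilityMeasure μ]
    (v W : Ω → ℝ) (hvm : Measurable v) (hWm : Measurable W)
    (hv : Integrable v μ) (hW : Integrable W μ)
    (hv0 : ∀ ω, 0 ≤ v ω) (hW0 : ∀ ω, 0 ≤ W ω)
    (hindep : IndepFun v W μ)
    (τ σ : ℝ) (hτσ : τ ≤ σ)
    (c : ℝ) (hc : c = ∫ ω, max (v ω - σ) 0 ∂μ) :
    (∫ ω in {ω | v ω > τ}, max (W ω) (v ω) ∂μ) - c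
      = ∫ ω in {ω | v ω > τ}, (max (W ω - v ω) 0 + min (v ω) σ) ∂μ := by
  have hs : MeasurableSet {ω | v ω > τ} := measurableSet_lt measurable_const hvm
  have hpos : Integrable (fun ω => max (v ω - σ) 0) μ :=
    (hv.sub (integrable_const σ)).sup (integrable_const 0)
  have hcs : c = ∫ ω in {ω | v ω > τ}, max (v ω - σ) 0 ∂μ := by
    rw [hc]
    symm
    apply setIntegral_eq_integral_of_forall_compl_eq_zero
    intro ω hω
    simp only [Set.mem_setOf_eq, not_lt] at hω
    have : v ω - σ ≤ 0 := by linarith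
    simp [max_eq_right this]
  rw [hcs]
  have hmax : Integrable (fun ω => max (W ω) (v ω)) μ := hW.sup hv
  rw [← integral_sub (hmax.restrict) (hpos.restrict)]
  apply integral_congr_ae
  filter_upwards with ω
  rcases le_total (W ω) (v ω) with h1 | h1 <;> rcases le_total (v ω) σ with h2 | h2 <;>
    simp [max_eq_left, max_eq_right, min_eq_left, min_eq_right, sub_nonpos.mpr, sub_nonneg.mpr,
      h1, h2] <;> linarith
end

section
/- Let W' and W be integrable random variables with W' = max(W, Z) for some random variable Z, and suppose E[W'] - E[W] ≤ δ. Then for any reals w ≤ w', ( E[(W - w)^+] - E[(W - w')^+] ) ≤ ( E[(W' - w)^+] - E[(W' - w')^+] ) + δ. -/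
open MeasureTheory

lemma gmono_aux {w w' : ℝ} (h : w ≤ w') {a b : ℝ} (hab : a ≤ b) :
    max (a - w) 0 - max (a - w') 0 ≤ max (b - w) 0 - max (b - w') 0 := by
  simp only [max_def]
  split_ifs <;> linarith

theorem bucket_support_transfer
    {Ω : Type*} [MeasurableSpace Ω] (μ : Measure Ω) [IsProbabilityMeasure μ]
    (W Z : Ω → ℝ) (hW : Integrable W μ) (hZ : Integrable Z μ)
    (δ : ℝ) (hδ : 0 ≤ δ)
    (hdiff : (∫ ω, max (W ω) (Z ω) ∂μ) - (∫ ω, W ω ∂μ) ≤ δ)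
    (w w' : ℝ) (hww' : w ≤ w') :
    (∫ ω, max (W ω - w) 0 ∂μ) - (∫ ω, max (W ω - w') 0 ∂μ)
      ≤ ((∫ ω, max (max (W ω) (Z ω) - w) 0 ∂μ)
          - (∫ ω, max (max (W ω) (Z ω) - w') 0 ∂μ)) + δ := by
  have hW' : Integrable (fun ω => max (W ω) (Z ω)) μ := hW.sup hZ
  have h1 : Integrable (fun ω => max (W ω - w) 0) μ :=
    (hW.sub (integrable_const w)).pos_part
  have h2 : Integrable (fun ω => max (W ω - w') 0) μ :=
    (hW.sub (integrable_const w')).pos_part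
  have h3 : Integrable (fun ω => max (max (W ω) (Z ω) - w) 0) μ :=
    (hW'.sub (integrable_const w)).pos_part
  have h4 : Integrable (fun ω => max (max (W ω) (Z ω) - w') 0) μ :=
    (hW'.sub (integrable_const w')).pos_part
  rw [← integral_sub h1 h2, ← integral_sub h3 h4]
  have := integral_mono (h1.sub h2) (h3.sub h4)
    (fun ω => gmono_aux hww' (le_max_left (W ω) (Z ω)))
  simp only [Pi.sub_apply] at this
  linarith
end
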